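/- Let σ(x) = 1/(1+e^{-x}) be the sigmoid function and let α ∈ ℝ. The Lebesgue measure of the set {u ∈ (0,1) : α + log u − log(1−u) > 0} equals σ(α), and the Lebesgue measure of the set {u ∈ (0,1) : α + log u − log(1−u) < 0} equals 1 − σ(α). Consequently, for U uniform on (0,1), P(lim_{τ→0⁺} G(α,τ) = 1) = σ(α) and P(lim_{τ→0⁺} G(α,τ) = 0) = 1 − σ(α), where G(α,τ) = σ((α + log U − log(1−U))/τ). -/

import Mathlib

/-!
The map u ↦ log u − log (1 − u) is the inverse of the strictly increasing bijection
σ : ℝ → (0,1), and σ(−α) = 1 − σ(α). Hence for u ∈ (0,1) the Gumbel noise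
α + log u − log (1 − u) is positive exactly when u > 1 − σ(α) and negative exactly when
u < 1 − σ(α), so the two sets are intervals of lengths σ(α) and 1 − σ(α). As τ → 0⁺,
σ(c/τ) tends to 1 if c > 0, to 0 if c < 0 and stays at 1/2 if c = 0, so the events
"G(α,τ) → 1" and "G(α,τ) → 0" are exactly these two sets.
-/

open MeasureTheory Real Filter Topology

noncomputable def sigmoid (x : ℝ) : ℝ := 1 / (1 + Real.exp (-x))

open Set

lemma sigmoid_eq_real_sigmoid : _root_.sigmoid = Real.sigmoid := by
  funext x
  rw [_root_.sigmoid, Real.sigmoid_def, one_div]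

namespace Real

lemma sigmoid_log_sub_log {u : ℝ} (h0 : 0 < u) (h1 : u < 1) :
    sigmoid (log u - log (1 - u)) = u := by
  have h1' : 0 < 1 - u := sub_pos.mpr h1
  rw [sigmoid_def, neg_sub, ← log_div h1'.ne' h0.ne', exp_log (div_pos h1' h0)]
  field_simp
  ring

lemma lt_log_sub_log_iff {a u : ℝ} (h0 : 0 < u) (h1 : u < 1) :
    a < log u - log (1 - u) ↔ sigmoid a < u := by
  rw [← sigmoid_lt_iff, sigmoid_log_sub_log h0 h1]

lemma log_sub_log_lt_iff {a u : ℝ} (h0 : 0 < u) (h1 : u < 1) :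
    log u - log (1 - u) < a ↔ u < sigmoid a := by
  rw [← sigmoid_lt_iff, sigmoid_log_sub_log h0 h1]

lemma sep_Ioo_pos_add_log_sub_log (α : ℝ) :
    {u ∈ Ioo (0 : ℝ) 1 | 0 < α + log u - log (1 - u)} = Ioo (1 - sigmoid α) 1 := by
  ext u
  simp only [mem_ofPred_eq, mem_Ioo]
  constructor
  · rintro ⟨⟨h0, h1⟩, h⟩
    rw [← sigmoid_neg, ← lt_log_sub_log_iff h0 h1]
    exact ⟨by linarith, h1⟩
  · rintro ⟨h, h1⟩
    have h0 : 0 < u := (sub_pos.mpr (sigmoid_lt_one α)).trans h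
    rw [← sigmoid_neg, ← lt_log_sub_log_iff h0 h1] at h
    exact ⟨⟨h0, h1⟩, by linarith⟩

lemma sep_Ioo_add_log_sub_log_neg (α : ℝ) :
    {u ∈ Ioo (0 : ℝ) 1 | α + log u - log (1 - u) < 0} = Ioo 0 (1 - sigmoid α) := by
  ext u
  simp only [mem_ofPred_eq, mem_Ioo]
  constructor
  · rintro ⟨⟨h0, h1⟩, h⟩
    rw [← sigmoid_neg, ← log_sub_log_lt_iff h0 h1]
    exact ⟨h0, by linarith⟩
  · rintro ⟨h0, h⟩
    have h1 : u < 1 := h.trans (sub_lt_self 1 (sigmoid_pos α))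
    rw [← sigmoid_neg, ← log_sub_log_lt_iff h0 h1] at h
    exact ⟨⟨h0, h1⟩, by linarith⟩

lemma tendsto_sigmoid_div_nhdsGT_zero_of_pos {c : ℝ} (hc : 0 < c) :
    Tendsto (fun τ => sigmoid (c / τ)) (𝓝[>] 0) (𝓝 1) := by
  simpa only [div_eq_mul_inv, Function.comp_def] using
    tendsto_sigmoid_atTop.comp (tendsto_inv_nhdsGT_zero.const_mul_atTop hc)

lemma tendsto_sigmoid_div_nhdsGT_zero_of_neg {c : ℝ} (hc : c < 0) :
    Tendsto (fun τ => sigmoid (c / τ)) (𝓝[>] 0) (𝓝 0) := by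
  simpa only [div_eq_mul_inv, Function.comp_def] using
    tendsto_sigmoid_atBot.comp (tendsto_inv_nhdsGT_zero.const_mul_atTop_of_neg hc)

lemma tendsto_sigmoid_zero_div_nhdsGT_zero_iff {l : ℝ} :
    Tendsto (fun τ => sigmoid (0 / τ)) (𝓝[>] 0) (𝓝 l) ↔ l = 2⁻¹ := by
  simp only [zero_div, sigmoid_zero, tendsto_const_nhds_iff, eq_comm]

lemma tendsto_sigmoid_div_nhdsGT_zero_one_iff (c : ℝ) :
    Tendsto (fun τ => sigmoid (c / τ)) (𝓝[>] 0) (𝓝 1) ↔ 0 < c := by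
  refine ⟨fun h => ?_, tendsto_sigmoid_div_nhdsGT_zero_of_pos⟩
  rcases lt_trichotomy c 0 with hc | rfl | hc
  · exact absurd (tendsto_nhds_unique h (tendsto_sigmoid_div_nhdsGT_zero_of_neg hc)) one_ne_zero
  · norm_num [tendsto_sigmoid_zero_div_nhdsGT_zero_iff] at h
  · exact hc

lemma tendsto_sigmoid_div_nhdsGT_zero_zero_iff (c : ℝ) :
    Tendsto (fun τ => sigmoid (c / τ)) (𝓝[>] 0) (𝓝 0) ↔ c < 0 := by
  refine ⟨fun h => ?_, tendsto_sigmoid_div_nhdsGT_zero_of_neg⟩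
  rcases lt_trichotomy c 0 with hc | rfl | hc
  · exact hc
  · norm_num [tendsto_sigmoid_zero_div_nhdsGT_zero_iff] at h
  · exact absurd (tendsto_nhds_unique h (tendsto_sigmoid_div_nhdsGT_zero_of_pos hc)) zero_ne_one

end Real

/-- The Lebesgue measure of {u ∈ (0,1) : α + log u − log(1−u) > 0} is σ(α), that of
    {u ∈ (0,1) : α + log u − log(1−u) < 0} is 1 − σ(α); consequently, for U uniform on
    (0,1), P(lim_{τ→0⁺} G(α,τ) = 1) = σ(α) and P(lim_{τ→0⁺} G(α,τ) = 0) = 1 − σ(α),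
    where G(α,τ) = σ((α + log U − log(1−U))/τ). -/
theorem gumbel_limit_is_bernoulli (α : ℝ) :
    volume {u ∈ Set.Ioo (0:ℝ) 1 | 0 < α + Real.log u - Real.log (1 - u)}
        = ENNReal.ofReal (_root_.sigmoid α) ∧
    volume {u ∈ Set.Ioo (0:ℝ) 1 | α + Real.log u - Real.log (1 - u) < 0}
        = ENNReal.ofReal (1 - _root_.sigmoid α) ∧
    (volume.restrict (Set.Ioo (0:ℝ) 1))
        {u : ℝ | Tendsto (fun τ : ℝ => _root_.sigmoid ((α + Real.log u - Real.log (1 - u)) / τ))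
          (𝓝[>] 0) (𝓝 1)} = ENNReal.ofReal (_root_.sigmoid α) ∧
    (volume.restrict (Set.Ioo (0:ℝ) 1))
        {u : ℝ | Tendsto (fun τ : ℝ => _root_.sigmoid ((α + Real.log u - Real.log (1 - u)) / τ))
          (𝓝[>] 0) (𝓝 0)} = ENNReal.ofReal (1 - _root_.sigmoid α) := by
  rw [sigmoid_eq_real_sigmoid]
  have h_pos : volume {u ∈ Ioo (0:ℝ) 1 | 0 < α + log u - log (1 - u)}
      = ENNReal.ofReal (Real.sigmoid α) := by
    rw [sep_Ioo_pos_add_log_sub_log, volume_Ioo, sub_sub_cancel]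
  have h_neg : volume {u ∈ Ioo (0:ℝ) 1 | α + log u - log (1 - u) < 0}
      = ENNReal.ofReal (1 - Real.sigmoid α) := by
    rw [sep_Ioo_add_log_sub_log_neg, volume_Ioo, sub_zero]
  simp only [Measure.restrict_apply' measurableSet_Ioo, tendsto_sigmoid_div_nhdsGT_zero_one_iff,
    tendsto_sigmoid_div_nhdsGT_zero_zero_iff, inter_comm _ (Ioo (0:ℝ) 1), inter_ofPred_eq_sep]
  exact ⟨h_pos, h_neg, h_pos, h_neg⟩
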